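/- Multivariate Prony: Let ζ_1,…,ζ_r be pairwise distinct points of ℝ^n and ω_1,…,ω_r nonzero real numbers, and consider the function h(u) = Σ_{i=1}^r ω_i e^{⟨ζ_i, u⟩} on ℝ^n. Let σ : ℝ[x_1,…,x_n] → ℝ be the linear functional with σ(x^α) = h(α) = Σ_{i=1}^r ω_i e^{⟨ζ_i, α⟩} for all α ∈ ℕ^n. Then the points ξ_i = (e^{ζ_{i,1}},…,e^{ζ_{i,n}}), i = 1,…,r, are pairwise distinct, the kernel I_σ of the Hankel operator H_σ is the vanishing ideal of {ξ_1,…,ξ_r}, rank H_σ = r, and the frequencies are recovered as ζ_{i,j} = log(ξ_{i,j}). -/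

import Mathlib

/-! On monomials, hence everywhere, `σ` agrees with `p ↦ ∑ i, ω i * p(ξ i)` where `ξ i = exp ∘ ζ i`,
so `H_σ p` is the functional `q ↦ ∑ i, ω i * p(ξ i) * q(ξ i)`. The `ξ i` are distinct, so products
of separating affine polynomials interpolate arbitrary values at them; testing `H_σ p` against the
interpolant of a Kronecker delta shows, as the weights are nonzero, that `H_σ p = 0` iff `p` vanishes
at every `ξ i`. Thus `H_σ` has the same kernel as the evaluation map `ℝ[x] → ℝʳ`, which is surjective,
and `range H_σ ≃ ℝ[x] ⧸ ker H_σ ≃ ℝʳ`. -/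

open MvPolynomial

/-- The Hankel operator `H_σ : p ↦ (q ↦ σ(p·q))` associated to a linear
functional `σ` on `K[x_1,…,x_n]`. -/
noncomputable def hankel {K : Type*} [Field K] {n : ℕ}
    (σ : MvPolynomial (Fin n) K →ₗ[K] K) :
    MvPolynomial (Fin n) K →ₗ[K] (MvPolynomial (Fin n) K →ₗ[K] K) :=
  (LinearMap.mul K (MvPolynomial (Fin n) K)).compr₂ σ

/-- The kernel `I_σ = {p | ∀ q, σ(p·q) = 0}` of the Hankel operator, as an ideal. -/
def hankelKer {K : Type*} [Field K] {n : ℕ}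
    (σ : MvPolynomial (Fin n) K →ₗ[K] K) : Ideal (MvPolynomial (Fin n) K) where
  carrier := {p | ∀ q, σ (p * q) = 0}
  add_mem' := by
    intro a b ha hb q
    rw [add_mul, map_add, ha, hb, add_zero]
  zero_mem' := by
    intro q
    rw [zero_mul, map_zero]
  smul_mem' := by
    intro c p hp q
    simp only [smul_eq_mul, Set.mem_setOf_eq] at *
    rw [mul_comm c p, mul_assoc]
    exact hp _

section Interpolation

variable {K σ ι : Type*} [Field K]

noncomputable def evalAtPoints (ξ : ι → σ → K) : MvPolynomial σ K →ₐ[K] (ι → K) :=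
  AlgHom.pi fun i => aeval (ξ i)

@[simp]
lemma evalAtPoints_apply (ξ : ι → σ → K) (p : MvPolynomial σ K) (i : ι) :
    evalAtPoints ξ p i = eval (ξ i) p := by
  simp [evalAtPoints]

lemma exists_eval_eq_one_eval_eq_zero {x y : σ → K} (h : x ≠ y) :
    ∃ p : MvPolynomial σ K, eval x p = 1 ∧ eval y p = 0 := by
  obtain ⟨j, hj⟩ := Function.ne_iff.mp h
  exact ⟨C (x j - y j)⁻¹ * (X j - C (y j)), by simp [sub_ne_zero.mpr hj], by simp⟩

lemma exists_evalAtPoints_eq_single [Fintype ι] [DecidableEq ι] {ξ : ι → σ → K}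
    (hξ : Function.Injective ξ) (i₀ : ι) :
    ∃ q : MvPolynomial σ K, evalAtPoints ξ q = Pi.single i₀ 1 := by
  have separate : ∀ k, ∃ p : MvPolynomial σ K, k ≠ i₀ → eval (ξ i₀) p = 1 ∧ eval (ξ k) p = 0 :=
    fun k => if hk : k = i₀ then ⟨0, absurd hk⟩ else
      (exists_eval_eq_one_eval_eq_zero (hξ.ne (Ne.symm hk))).imp fun _ hp _ => hp
  choose p hp using separate
  refine ⟨∏ k ∈ Finset.univ.erase i₀, p k, funext fun m => ?_⟩
  rw [evalAtPoints_apply, map_prod]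
  by_cases hm : m = i₀
  · subst hm
    rw [Pi.single_eq_same]
    exact Finset.prod_eq_one fun k hk => (hp k (Finset.ne_of_mem_erase hk)).1
  · rw [Pi.single_eq_of_ne hm]
    exact Finset.prod_eq_zero (Finset.mem_erase.2 ⟨hm, Finset.mem_univ m⟩) (hp m hm).2

lemma evalAtPoints_surjective [Finite ι] {ξ : ι → σ → K} (hξ : Function.Injective ξ) :
    Function.Surjective (evalAtPoints ξ) := by
  classical
  have := Fintype.ofFinite ι
  choose q hq using exists_evalAtPoints_eq_single hξ
  intro v
  refine ⟨∑ i, v i • q i, ?_⟩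
  simp only [map_sum, map_smul, hq]
  ext k
  simp [Pi.single_apply]

end Interpolation

section Hankel

variable {K ι : Type*} [Field K] [Fintype ι] {n : ℕ} {σ : MvPolynomial (Fin n) K →ₗ[K] K}
  {ξ : ι → Fin n → K} {ω : ι → K}

lemma mem_hankelKer_iff_hankel_eq_zero {p : MvPolynomial (Fin n) K} :
    p ∈ hankelKer σ ↔ hankel σ p = 0 := by
  rw [LinearMap.ext_iff]
  rfl

lemma hankel_eq_zero_iff (hξ : Function.Injective ξ) (hω : ∀ i, ω i ≠ 0)
    (hσ : ∀ p, σ p = ∑ i, ω i * eval (ξ i) p) {p : MvPolynomial (Fin n) K} :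
    hankel σ p = 0 ↔ evalAtPoints ξ p = 0 := by
  classical
  constructor
  · intro hp
    funext i₀
    obtain ⟨q, hq⟩ := exists_evalAtPoints_eq_single hξ i₀
    have hq' (i : ι) : eval (ξ i) q = (Pi.single i₀ 1 : ι → K) i := by rw [← evalAtPoints_apply, hq]
    have := LinearMap.congr_fun hp q
    simp only [hankel, LinearMap.compr₂_apply, LinearMap.mul_apply_apply, hσ, map_mul, hq',
      Pi.single_apply, mul_ite, mul_one, mul_zero, Finset.sum_ite_eq', Finset.mem_univ,
      ↓reduceIte, LinearMap.zero_apply, mul_eq_zero] at this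
    simpa using this.resolve_left (hω i₀)
  · intro hp
    have hp' (i : ι) : eval (ξ i) p = 0 := by rw [← evalAtPoints_apply, hp, Pi.zero_apply]
    ext q
    simp [hankel, hσ, hp']

lemma rank_range_hankel (hξ : Function.Injective ξ) (hω : ∀ i, ω i ≠ 0)
    (hσ : ∀ p, σ p = ∑ i, ω i * eval (ξ i) p) :
    Module.rank K (LinearMap.range (hankel σ)) = Fintype.card ι := by
  have hker : LinearMap.ker (hankel σ) = LinearMap.ker (evalAtPoints ξ).toLinearMap := by
    ext p
    exact hankel_eq_zero_iff hξ hω hσ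
  let e := (hankel σ).quotKerEquivRange.symm ≪≫ₗ Submodule.quotEquivOfEq _ _ hker ≪≫ₗ
    (evalAtPoints ξ).toLinearMap.quotKerEquivOfSurjective (evalAtPoints_surjective hξ)
  simpa using e.lift_rank_eq

end Hankel

lemma eval_exp_monomial_one {n : ℕ} (ζ : Fin n → ℝ) (α : Fin n →₀ ℕ) :
    eval (fun j => Real.exp (ζ j)) (monomial α 1) = Real.exp (∑ j, ζ j * α j) := by
  rw [eval_monomial, one_mul, Finsupp.prod_pow, Real.exp_sum]
  exact Finset.prod_congr rfl fun j _ => by rw [mul_comm, Real.exp_nat_mul]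

lemma eq_sum_eval_exp_of_apply_monomial {n r : ℕ} {ζ : Fin r → Fin n → ℝ} {ω : Fin r → ℝ}
    {σ : MvPolynomial (Fin n) ℝ →ₗ[ℝ] ℝ}
    (hσ : ∀ α : Fin n →₀ ℕ, σ (monomial α (1 : ℝ)) =
      ∑ i : Fin r, ω i * Real.exp (∑ j : Fin n, ζ i j * (α j : ℝ)))
    (p : MvPolynomial (Fin n) ℝ) :
    σ p = ∑ i, ω i * eval (fun j => Real.exp (ζ i j)) p := by
  suffices σ = ∑ i, ω i • (aeval fun j => Real.exp (ζ i j)).toLinearMap by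
    simp [this]
  refine linearMap_ext fun α => LinearMap.ext_ring ?_
  simp [hσ, eval_exp_monomial_one]

/-- Multivariate Prony: for `h(u) = Σ_i ω_i e^{⟨ζ_i,u⟩}` with pairwise distinct
`ζ_i` and nonzero `ω_i`, and `σ(x^α) = h(α)`, the points `ξ_i = (e^{ζ_{i,j}})_j`
are pairwise distinct, `I_σ` is their vanishing ideal, `rank H_σ = r`, and the
frequencies are recovered as `ζ_{i,j} = log ξ_{i,j}`. -/
theorem multivariate_prony {n r : ℕ}
    (ζ : Fin r → Fin n → ℝ) (hζ : Function.Injective ζ)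
    (ω : Fin r → ℝ) (hω : ∀ i, ω i ≠ 0)
    (σ : MvPolynomial (Fin n) ℝ →ₗ[ℝ] ℝ)
    (hσ : ∀ α : Fin n →₀ ℕ, σ (monomial α (1 : ℝ)) =
      ∑ i : Fin r, ω i * Real.exp (∑ j : Fin n, ζ i j * (α j : ℝ))) :
    Function.Injective (fun i : Fin r => fun j : Fin n => Real.exp (ζ i j)) ∧
    (∀ p : MvPolynomial (Fin n) ℝ,
      p ∈ hankelKer σ ↔
        ∀ i : Fin r, eval (fun j : Fin n => Real.exp (ζ i j)) p = 0) ∧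
    Module.rank ℝ ↥(LinearMap.range (hankel σ)) = r ∧
    (∀ i : Fin r, ∀ j : Fin n, Real.log (Real.exp (ζ i j)) = ζ i j) := by
  have hξ : Function.Injective fun i j => Real.exp (ζ i j) :=
    Real.exp_injective.comp_left.comp hζ
  have hσξ := eq_sum_eval_exp_of_apply_monomial hσ
  refine ⟨hξ, fun p => ?_, ?_, fun i j => Real.log_exp _⟩
  · rw [mem_hankelKer_iff_hankel_eq_zero, hankel_eq_zero_iff hξ hω hσξ, funext_iff]
    simp
  · rw [rank_range_hankel hξ hω hσξ, Fintype.card_fin]
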